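/- arXiv:0811.3400 — 9 statements merged into one kernel-verified Lean document; each statement's English description precedes it below -/
import Mathlib

section
/- Let T = (L, R, τ) be a rewrite rule (without cloning) and m : L → G a graph morphism whose underlying function on nodes is injective. Then a heterogeneous pushout of T and m exists, i.e. the category of heterogeneous cones over T and m has an initial object. -/
/-!
Termgraphs over a signature `Ω` with arity function `ar`.
A termgraph has a type of nodes `N`; a node `n` is *labeled* when `label n = some ω`,
and then its successor string `succ n` has length `ar ω`; unlabeled nodes have an
empty successor string (the successor function is only meaningful on labeled nodes).
-/

universe u

structure TermGraph (Ω : Type u) (ar : Ω → ℕ) : Type (u + 1) where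
  N : Type u
  label : N → Option Ω
  succ : N → List N
  arity_eq : ∀ n : N, (succ n).length = ((label n).map ar).getD 0

namespace TermGraph

variable {Ω : Type u} {ar : Ω → ℕ}

/-- A graph morphism: preserves labeled nodes, labels and successors. -/
structure Hom (G H : TermGraph Ω ar) : Type u where
  toFun : G.N → H.N
  label_eq : ∀ (n : G.N) (ω : Ω), G.label n = some ω → H.label (toFun n) = some ω
  succ_eq : ∀ (n : G.N) (ω : Ω), G.label n = some ω →
    H.succ (toFun n) = (G.succ n).map toFun

/-- `γ` is graphic at `n`: either `n` is unlabeled, or both `n` and `γ n` are labeled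
with the same label and corresponding successors. -/
def GraphicAt (G H : TermGraph Ω ar) (γ : G.N → H.N) (n : G.N) : Prop :=
  ∀ ω : Ω, G.label n = some ω →
    H.label (γ n) = some ω ∧ H.succ (γ n) = (G.succ n).map γ

/-- `γ` is strictly graphic at `n`: either both `n` and `γ n` are unlabeled, or both
are labeled with the same label and corresponding successors.  (When both are
unlabeled both successor strings are empty, so the successor condition is harmless.) -/
def StrictGraphicAt (G H : TermGraph Ω ar) (γ : G.N → H.N) (n : G.N) : Prop :=
  H.label (γ n) = G.label n ∧ H.succ (γ n) = (G.succ n).map γ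

def GraphicOn (G H : TermGraph Ω ar) (γ : G.N → H.N) (Γ : Set G.N) : Prop :=
  ∀ n ∈ Γ, GraphicAt G H γ n

def StrictGraphicOn (G H : TermGraph Ω ar) (γ : G.N → H.N) (Γ : Set G.N) : Prop :=
  ∀ n ∈ Γ, StrictGraphicAt G H γ n

/-- `p ∈ |H|` is a `τ`-clone of `q ∈ |G|` (for `τ : |G| → |H|`): `p` is labeled iff
`q` is labeled, and then they carry the same label and `𝓢_H p = τ*(𝓢_G q)`. -/
def IsClone (G H : TermGraph Ω ar) (τ : G.N → H.N) (p : H.N) (q : G.N) : Prop :=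
  H.label p = G.label q ∧ H.succ p = (G.succ q).map τ

end TermGraph

open TermGraph

/-- `(H, τ₁, d)` is a heterogeneous cone over the rewrite rule (without cloning)
`(L, R, τ)` and the graph morphism `m : L → G`: `|d| ∘ τ = τ₁ ∘ |m|` and `τ₁` is
graphic on `|G| − |m(L)|`. -/
def IsHetCone {Ω : Type u} {ar : Ω → ℕ} (L R G : TermGraph Ω ar)
    (τ : L.N → R.N) (m : Hom L G)
    (H : TermGraph Ω ar) (τ₁ : G.N → H.N) (d : Hom R H) : Prop :=
  d.toFun ∘ τ = τ₁ ∘ m.toFun ∧ GraphicOn G H τ₁ ((Set.range m.toFun)ᶜ)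

/-- `h` is a morphism of heterogeneous cones from `(H, τ₁, d)` to `(H', τ₁', d')`. -/
def IsHetConeMorphism {Ω : Type u} {ar : Ω → ℕ} {R G H H' : TermGraph Ω ar}
    (τ₁ : G.N → H.N) (d : Hom R H) (τ₁' : G.N → H'.N) (d' : Hom R H')
    (h : Hom H H') : Prop :=
  h.toFun ∘ τ₁ = τ₁' ∧ h.toFun ∘ d.toFun = d'.toFun

/-!
The heterogeneous pushout is built by gluing `R` onto the part of `G` outside the image of
the match: its nodes are `|R| ⊔ (|G| − |m(L)|)`, a node of `R` keeps its label and successors,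
and a node of `G` outside `m(L)` keeps its label while its successors are sent along
`τ₁`, where `τ₁ (m l) = τ l` (well defined because `m` is injective) and `τ₁` is the inclusion
elsewhere. Given any cone `(H', τ₁', d')`, the mediating morphism is forced to be `d'` on `R`
and `τ₁'` on the rest; it is a graph morphism because `τ₁'` is graphic outside `m(L)`.
-/

namespace TermGraph

variable {Ω : Type u} {ar : Ω → ℕ}

theorem Hom.ext {G H : TermGraph Ω ar} {f g : Hom G H} (h : f.toFun = g.toFun) : f = g := by
  cases f; cases g; cases h; rfl

end TermGraph

section HetPushout

variable {Ω : Type u} {ar : Ω → ℕ} {L R G : TermGraph Ω ar} (τ : L.N → R.N) (m : Hom L G)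

open Classical in
noncomputable def hetPushoutMap (g : G.N) : R.N ⊕ {g : G.N // g ∉ Set.range m.toFun} :=
  if h : g ∈ Set.range m.toFun then .inl (τ h.choose) else .inr ⟨g, h⟩

variable {m} in
theorem hetPushoutMap_apply_hom (hm : Function.Injective m.toFun) (l : L.N) :
    hetPushoutMap τ m (m.toFun l) = .inl (τ l) := by
  have h : m.toFun l ∈ Set.range m.toFun := ⟨l, rfl⟩
  rw [hetPushoutMap, dif_pos h, hm h.choose_spec]

theorem hetPushoutMap_of_notMem {g : G.N} (h : g ∉ Set.range m.toFun) :
    hetPushoutMap τ m g = .inr ⟨g, h⟩ :=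
  dif_neg h

noncomputable abbrev hetPushout : TermGraph Ω ar where
  N := R.N ⊕ {g : G.N // g ∉ Set.range m.toFun}
  label := Sum.elim R.label (G.label ∘ Subtype.val)
  succ := Sum.elim (fun r => (R.succ r).map .inl) (fun g => (G.succ g.1).map (hetPushoutMap τ m))
  arity_eq := by
    rintro (r | g)
    · simpa using R.arity_eq r
    · simpa using G.arity_eq g.1

noncomputable def hetPushoutInl : Hom R (hetPushout τ m) where
  toFun := .inl
  label_eq _ _ h := h
  succ_eq _ _ _ := rfl

variable {m} in
theorem isHetCone_hetPushout (hm : Function.Injective m.toFun) :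
    IsHetCone L R G τ m (hetPushout τ m) (hetPushoutMap τ m) (hetPushoutInl τ m) := by
  refine ⟨funext fun l => (hetPushoutMap_apply_hom τ hm l).symm, fun g hg ω hω => ?_⟩
  rw [hetPushoutMap_of_notMem τ m hg]
  exact ⟨hω, rfl⟩

variable {m}

def hetPushoutDesc {H' : TermGraph Ω ar} (τ₁' : G.N → H'.N) (d' : Hom R H') :
    (hetPushout τ m).N → H'.N :=
  Sum.elim d'.toFun (τ₁' ∘ Subtype.val)

variable {H' : TermGraph Ω ar} {τ₁' : G.N → H'.N} {d' : Hom R H'}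

theorem hetPushoutDesc_comp_hetPushoutMap (hm : Function.Injective m.toFun)
    (hτ : d'.toFun ∘ τ = τ₁' ∘ m.toFun) :
    hetPushoutDesc τ τ₁' d' ∘ hetPushoutMap τ m = τ₁' := by
  funext g
  by_cases hg : g ∈ Set.range m.toFun
  · obtain ⟨l, rfl⟩ := hg
    simpa [hetPushoutMap_apply_hom τ hm l, hetPushoutDesc] using congrFun hτ l
  · simp [hetPushoutMap_of_notMem τ m hg, hetPushoutDesc]

noncomputable def hetPushoutDescHom (hm : Function.Injective m.toFun)
    (hc : IsHetCone L R G τ m H' τ₁' d') : Hom (hetPushout τ m) H' where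
  toFun := hetPushoutDesc τ τ₁' d'
  label_eq := by
    rintro (r | g) ω hω
    · exact d'.label_eq r ω hω
    · exact (hc.2 g.1 g.2 ω hω).1
  succ_eq := by
    rintro (r | g) ω hω
    · calc H'.succ (d'.toFun r) = (R.succ r).map d'.toFun := d'.succ_eq r ω hω
        _ = ((R.succ r).map .inl).map (hetPushoutDesc τ τ₁' d') := by rw [List.map_map]; rfl
    · calc H'.succ (τ₁' g.1) = (G.succ g.1).map τ₁' := (hc.2 g.1 g.2 ω hω).2
        _ = ((G.succ g.1).map (hetPushoutMap τ m)).map (hetPushoutDesc τ τ₁' d') := by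
          rw [List.map_map, hetPushoutDesc_comp_hetPushoutMap τ hm hc.1]

theorem isHetConeMorphism_hetPushoutDescHom (hm : Function.Injective m.toFun)
    (hc : IsHetCone L R G τ m H' τ₁' d') :
    IsHetConeMorphism (hetPushoutMap τ m) (hetPushoutInl τ m) τ₁' d'
      (hetPushoutDescHom τ hm hc) :=
  ⟨hetPushoutDesc_comp_hetPushoutMap τ hm hc.1, rfl⟩

theorem toFun_eq_hetPushoutDesc {h : Hom (hetPushout τ m) H'}
    (hh : IsHetConeMorphism (hetPushoutMap τ m) (hetPushoutInl τ m) τ₁' d' h) :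
    h.toFun = hetPushoutDesc τ τ₁' d' := by
  funext x
  rcases x with r | ⟨g, hg⟩
  · exact congrFun hh.2 r
  · simpa [hetPushoutMap_of_notMem τ m hg, hetPushoutDesc] using congrFun hh.1 g

end HetPushout

/-- Existence of the heterogeneous pushout of a rewrite rule without cloning
`T = (L, R, τ)` and a matching `m : L → G` (a graph morphism injective on nodes):
the category of heterogeneous cones over `T` and `m` has an initial object. -/
theorem het_pushout_exists {Ω : Type u} {ar : Ω → ℕ} (L R G : TermGraph Ω ar)
    (τ : L.N → R.N) (m : Hom L G) (hm : Function.Injective m.toFun) :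
    ∃ (H : TermGraph Ω ar) (τ₁ : G.N → H.N) (d : Hom R H),
      IsHetCone L R G τ m H τ₁ d ∧
      ∀ (H' : TermGraph Ω ar) (τ₁' : G.N → H'.N) (d' : Hom R H'),
        IsHetCone L R G τ m H' τ₁' d' →
        ∃! h : Hom H H', IsHetConeMorphism τ₁ d τ₁' d' h := by
  refine ⟨hetPushout τ m, hetPushoutMap τ m, hetPushoutInl τ m,
    isHetCone_hetPushout τ hm, fun H' τ₁' d' hc => ?_⟩
  exact ⟨hetPushoutDescHom τ hm hc, isHetConeMorphism_hetPushoutDescHom τ hm hc,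
    fun h hh => TermGraph.Hom.ext (toFun_eq_hetPushoutDesc τ hh)⟩
end

section
/- Let T = (L, R, τ) be a rewrite rule (without cloning) and m : L → G a graph morphism whose underlying function on nodes is injective. If (H, τ₁, d) is a heterogeneous pushout of T and m, then d : R → H has injective underlying node function, i.e. d is itself a matching of R. -/
/-!
Termgraphs over a signature `Ω` with arity function `ar`.
A termgraph has a type of nodes `N`; a node `n` is *labeled* when `label n = some ω`,
and then its successor string `succ n` has length `ar ω`; unlabeled nodes have an
empty successor string (the successor function is only meaningful on labeled nodes).
-/

universe u

open TermGraph

/-!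
Glue `R` next to `G`: on `|G| ⊕ |R|` take the labels of `G` and `R`, and let every matched
node `m l` of `G` stand for `τ l` (well defined because `m` is injective on nodes). This is a
heterogeneous cone in which `R` embeds by `Sum.inr`, and the mediating morphism out of the
pushout turns `d` into that embedding, so `d` is injective.
-/

namespace TermGraph

variable {Ω : Type u} {ar : Ω → ℕ} {L R G : TermGraph Ω ar}

noncomputable def sumMap (τ : L.N → R.N) (m : Hom L G) : G.N → G.N ⊕ R.N :=
  Function.extend m.toFun (Sum.inr ∘ τ) Sum.inl

noncomputable def sumGraph (τ : L.N → R.N) (m : Hom L G) : TermGraph Ω ar where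
  N := G.N ⊕ R.N
  label := Sum.elim G.label R.label
  succ := Sum.elim (fun g => (G.succ g).map (sumMap τ m)) (fun r => (R.succ r).map Sum.inr)
  arity_eq := by rintro (g | r) <;> simp [G.arity_eq, R.arity_eq]

noncomputable def sumInr (τ : L.N → R.N) (m : Hom L G) : Hom R (sumGraph τ m) where
  toFun := Sum.inr
  label_eq _ _ h := h
  succ_eq _ _ _ := rfl

theorem isHetCone_sumGraph {τ : L.N → R.N} {m : Hom L G} (hm : Function.Injective m.toFun) :
    IsHetCone L R G τ m (sumGraph τ m) (sumMap τ m) (sumInr τ m) := by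
  refine ⟨funext fun l => (hm.extend_apply _ _ l).symm, fun g hg ω hω => ?_⟩
  have hunmatched : sumMap τ m g = Sum.inl g := Function.extend_apply' _ _ g hg
  exact ⟨by simp [sumGraph, hunmatched, hω], by simp [sumGraph, hunmatched]⟩

theorem IsHetConeMorphism.injective_of_injective {R G H H' : TermGraph Ω ar}
    {τ₁ : G.N → H.N} {d : Hom R H} {τ₁' : G.N → H'.N} {d' : Hom R H'} {h : Hom H H'}
    (hh : IsHetConeMorphism τ₁ d τ₁' d' h) (hd' : Function.Injective d'.toFun) :
    Function.Injective d.toFun :=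
  Function.Injective.of_comp (f := h.toFun) (hh.2 ▸ hd')

end TermGraph

theorem het_pushout_d_injective_general {Ω : Type u} {ar : Ω → ℕ} (L R G : TermGraph Ω ar)
    (τ : L.N → R.N) (m : Hom L G) (hm : Function.Injective m.toFun)
    (H : TermGraph Ω ar) (τ₁ : G.N → H.N) (d : Hom R H)
    (hinit : ∀ (H' : TermGraph Ω ar) (τ₁' : G.N → H'.N) (d' : Hom R H'),
      IsHetCone L R G τ m H' τ₁' d' →
      ∃! h : Hom H H', IsHetConeMorphism τ₁ d τ₁' d' h) :
    Function.Injective d.toFun := by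
  obtain ⟨h, hh, -⟩ := hinit _ _ _ (isHetCone_sumGraph hm)
  exact hh.injective_of_injective Sum.inr_injective

/-- If `(H, τ₁, d)` is a heterogeneous pushout of a rewrite rule without cloning
`T = (L, R, τ)` and a matching `m : L → G` (a graph morphism injective on nodes),
then `d : R → H` is injective on nodes, i.e. `d` is itself a matching of `R`. -/
theorem het_pushout_d_injective {Ω : Type u} {ar : Ω → ℕ} (L R G : TermGraph Ω ar)
    (τ : L.N → R.N) (m : Hom L G) (hm : Function.Injective m.toFun)
    (H : TermGraph Ω ar) (τ₁ : G.N → H.N) (d : Hom R H)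
    (hcone : IsHetCone L R G τ m H τ₁ d)
    (hinit : ∀ (H' : TermGraph Ω ar) (τ₁' : G.N → H'.N) (d' : Hom R H'),
      IsHetCone L R G τ m H' τ₁' d' →
      ∃! h : Hom H H', IsHetConeMorphism τ₁ d τ₁' d' h) :
    Function.Injective d.toFun :=
  het_pushout_d_injective_general L R G τ m hm H τ₁ d hinit
end

section
/- Let T = (L, R, τ, σ) be a rewrite rule and m : L → G a matching with respect to T. Let (ℋ, τ₁ : |G| → ℋ, δ : |R| → ℋ) be the pushout of τ : |L| → |R| and |m| : |L| → |G| in the category of sets. Then for any two distinct nodes n and n' of R with δ(n) = δ(n'), both n and n' belong to dom(σ) and σ(n) = σ(n') in L. -/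
/-!
Termgraphs over a signature `Ω` with arity function `ar`.
A termgraph has a type of nodes `N`; a node `n` is *labeled* when `label n = some ω`,
and then its successor string `succ n` has length `ar ω`; unlabeled nodes have an
empty successor string (the successor function is only meaningful on labeled nodes).
-/

universe u

open TermGraph

/-- `(P, τ₁, δ)` is a pushout of `τ : L → R` and `m : L → G` in the category of sets:
the square commutes and it satisfies the universal property of pushouts. -/
def IsSetPushout {L R G P : Type u} (τ : L → R) (m : L → G)
    (τ₁ : G → P) (δ : R → P) : Prop :=
  τ₁ ∘ m = δ ∘ τ ∧
  ∀ (P' : Type u) (τ₁' : G → P') (δ' : R → P'), τ₁' ∘ m = δ' ∘ τ →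
    ∃! η : P → P', η ∘ τ₁ = τ₁' ∧ η ∘ δ = δ'

/-- A rewrite rule `(L, R, τ, σ)`: `τ : |L| → |R|` is a total function and
`σ : |R| ⇀ |L|` is a partial function (encoded via `Option`) such that each node
in the domain of `σ` is unlabeled or is a `τ`-clone of its `σ`-image. -/
structure Rule (Ω : Type u) (ar : Ω → ℕ) : Type (u + 1) where
  L : TermGraph Ω ar
  R : TermGraph Ω ar
  τ : L.N → R.N
  σ : R.N → Option L.N
  σ_cond : ∀ (n : R.N) (q : L.N), σ n = some q →
    R.label n = none ∨ IsClone L R τ n q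

/-- A matching with respect to a rewrite rule `T`: a graph morphism `m : L → G` such
that whenever `m p = m p'` for distinct nodes `p, p'` of `L`, then `τ p` and `τ p'`
are in the domain of `σ` and `σ (τ p) = σ (τ p')`. -/
def IsMatching {Ω : Type u} {ar : Ω → ℕ} (T : Rule Ω ar) (G : TermGraph Ω ar)
    (m : TermGraph.Hom T.L G) : Prop :=
  ∀ p p' : T.L.N, p ≠ p' → m.toFun p = m.toFun p' →
    (T.σ (T.τ p)).isSome ∧ (T.σ (T.τ p')).isSome ∧ T.σ (T.τ p) = T.σ (T.τ p')

/-- Along the pushout of `τ` and `|m|` in the category of sets (for a matching `m`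
with respect to the rewrite rule `T`), if `δ n = δ n'` for distinct nodes `n, n'`
of `R` then `n` and `n'` are in the domain of `σ` and `σ n = σ n'`. -/
theorem delta_eq_imp_sigma_eq {Ω : Type u} {ar : Ω → ℕ} (T : Rule Ω ar)
    (G : TermGraph Ω ar) (m : TermGraph.Hom T.L G) (hm : IsMatching T G m)
    {ℋ : Type u} (τ₁ : G.N → ℋ) (δ : T.R.N → ℋ)
    (hpo : IsSetPushout T.τ m.toFun τ₁ δ) :
    ∀ n n' : T.R.N, n ≠ n' → δ n = δ n' →
      (T.σ n).isSome ∧ (T.σ n').isSome ∧ T.σ n = T.σ n' := by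
  classical
  intro n n' hne hδ
  -- Setoid identifying nodes with equal, defined σ-images
  let r : T.R.N → T.R.N → Prop := fun a b => a = b ∨ ((T.σ a).isSome ∧ T.σ a = T.σ b)
  have hr_refl : ∀ a, r a a := fun a => Or.inl rfl
  have hr_symm : ∀ {a b}, r a b → r b a := by
    rintro a b (rfl | ⟨h1, h2⟩)
    · exact Or.inl rfl
    · exact Or.inr ⟨h2 ▸ h1, h2.symm⟩
  have hr_trans : ∀ {a b c}, r a b → r b c → r a c := by
    rintro a b c (rfl | ⟨h1, h2⟩) h
    · exact h
    · rcases h with rfl | ⟨h3, h4⟩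
      · exact Or.inr ⟨h1, h2⟩
      · exact Or.inr ⟨h1, h2.trans h4⟩
  let s : Setoid T.R.N := ⟨r, hr_refl, hr_symm, hr_trans⟩
  let P' : Type u := Quotient s ⊕ G.N
  let δ' : T.R.N → P' := fun a => Sum.inl (Quotient.mk s a)
  let τ₁' : G.N → P' := fun g =>
    if h : ∃ p, m.toFun p = g then Sum.inl (Quotient.mk s (T.τ h.choose)) else Sum.inr g
  have hcomm : τ₁' ∘ m.toFun = δ' ∘ T.τ := by
    funext p
    have h : ∃ q, m.toFun q = m.toFun p := ⟨p, rfl⟩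
    simp only [Function.comp, τ₁', dif_pos h, δ']
    congr 1
    apply Quotient.sound
    show r (T.τ h.choose) (T.τ p)
    by_cases hp : h.choose = p
    · exact Or.inl (congrArg T.τ hp)
    · obtain ⟨h1, _, h3⟩ := hm h.choose p hp h.choose_spec
      exact Or.inr ⟨h1, h3⟩
  obtain ⟨η, ⟨hη1, hη2⟩, _⟩ := hpo.2 P' τ₁' δ' hcomm
  have : δ' n = δ' n' := by
    have := congrArg η hδ
    simpa [← congrFun hη2 n, ← congrFun hη2 n'] using this
  have hq : Quotient.mk s n = Quotient.mk s n' := Sum.inl.inj this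
  rcases Quotient.exact hq with h | ⟨h1, h2⟩
  · exact absurd h hne
  · exact ⟨h1, h2 ▸ h1, h2⟩
end

section
/- Let T = (L, R, τ, σ) be a rewrite rule and m : L → G a matching with respect to T. Let (ℋ, τ₁ : |G| → ℋ, δ : |R| → ℋ) be the pushout of τ : |L| → |R| and |m| : |L| → |G| in the category of sets. Set Γ = |G| − |m(L)|, Σ = dom(σ) and Δ = |R| − Σ. Then ℋ is the disjoint union of τ₁(Γ), δ(Δ) and δ(Σ); the restriction of τ₁ to a map Γ → τ₁(Γ) is bijective; and the restriction of δ to a map Δ → δ(Δ) is bijective. -/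
/-!
Termgraphs over a signature `Ω` with arity function `ar`.
A termgraph has a type of nodes `N`; a node `n` is *labeled* when `label n = some ω`,
and then its successor string `succ n` has length `ar ω`; unlabeled nodes have an
empty successor string (the successor function is only meaningful on labeled nodes).
-/

universe u

open TermGraph

/-!
In a pushout of sets, every point comes from `G` or from `R`, and any commuting cocone
`(τ₁', δ')` factors through `(τ₁, δ)`; so two points are distinct in the pushout as soon
as some cocone tells them apart. A cocone into `Option G` keeping exactly the nodes outside
`m(L)` separates `τ₁(Γ)`; a cocone into `Option R` keeping exactly the nodes outside `Σ`
separates `δ(Δ)`. The latter is a cocone because, by the matching condition, a node of `L`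
whose `τ`-image lies outside `Σ` shares its `m`-image with no other node.
-/

namespace IsSetPushout

variable {L R G P : Type u} {τ : L → R} {m : L → G} {τ₁ : G → P} {δ : R → P}

theorem comm_apply (h : IsSetPushout τ m τ₁ δ) (p : L) : τ₁ (m p) = δ (τ p) :=
  congrFun h.1 p

theorem exists_desc (h : IsSetPushout τ m τ₁ δ) {P' : Type u} {τ₁' : G → P'} {δ' : R → P'}
    (hc : τ₁' ∘ m = δ' ∘ τ) : ∃ η : P → P', η ∘ τ₁ = τ₁' ∧ η ∘ δ = δ' :=
  (h.2 P' τ₁' δ' hc).exists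

theorem range_union_range (h : IsSetPushout τ m τ₁ δ) :
    Set.range τ₁ ∪ Set.range δ = Set.univ := by
  -- Both maps below into `ULift Prop` are induced by the constant cocone `True`.
  obtain ⟨η, -, huniq⟩ := h.2 (ULift.{u} Prop) (fun _ => ⟨True⟩) (fun _ => ⟨True⟩) rfl
  have htrue : (fun _ => ⟨True⟩) = η := huniq _ ⟨rfl, rfl⟩
  have hmem : (fun a => (⟨a ∈ Set.range τ₁ ∪ Set.range δ⟩ : ULift.{u} Prop)) = η := by
    refine huniq _ ⟨funext fun g => ?_, funext fun n => ?_⟩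
    · exact congrArg ULift.up (eq_true (Or.inl ⟨g, rfl⟩))
    · exact congrArg ULift.up (eq_true (Or.inr ⟨n, rfl⟩))
  exact Set.eq_univ_of_forall fun a =>
    of_eq_true (congrArg ULift.down (congrFun (hmem.trans htrue.symm) a))

theorem image_compl_range_union_range (h : IsSetPushout τ m τ₁ δ) :
    τ₁ '' (Set.range m)ᶜ ∪ Set.range δ = Set.univ := by
  refine Set.eq_univ_of_univ_subset
    (h.range_union_range ▸ Set.union_subset ?_ Set.subset_union_right)
  rintro _ ⟨g, rfl⟩
  by_cases hg : g ∈ Set.range m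
  · obtain ⟨p, rfl⟩ := hg
    exact Or.inr ⟨τ p, (h.comm_apply p).symm⟩
  · exact Or.inl ⟨g, hg, rfl⟩

open Classical in
theorem exists_option_left (h : IsSetPushout τ m τ₁ δ) :
    ∃ η : P → Option G, (∀ g ∉ Set.range m, η (τ₁ g) = some g) ∧ ∀ n, η (δ n) = none := by
  obtain ⟨η, hη₁, hη₂⟩ :=
    h.exists_desc (τ₁' := fun g => if g ∈ Set.range m then none else some g) (δ' := fun _ => none)
      (funext fun p => if_pos ⟨p, rfl⟩)
  exact ⟨η, fun g hg => (congrFun hη₁ g).trans (if_neg hg), congrFun hη₂⟩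

theorem injOn_compl_range (h : IsSetPushout τ m τ₁ δ) : Set.InjOn τ₁ (Set.range m)ᶜ := by
  obtain ⟨η, hη, -⟩ := h.exists_option_left
  intro g hg g' hg' he
  simpa [hη g hg, hη g' hg'] using congrArg η he

theorem disjoint_image_compl_range_range (h : IsSetPushout τ m τ₁ δ) :
    Disjoint (τ₁ '' (Set.range m)ᶜ) (Set.range δ) := by
  obtain ⟨η, hη₁, hη₂⟩ := h.exists_option_left
  refine Set.disjoint_left.2 ?_
  rintro _ ⟨g, hg, rfl⟩ ⟨n, hn⟩
  simpa [hη₁ g hg, hη₂ n] using congrArg η hn.symm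

open Classical in
theorem exists_option_right (h : IsSetPushout τ m τ₁ δ) {S : Set R}
    (hS : ∀ p p', m p = m p' → τ p ∉ S → τ p' = τ p) :
    ∃ η : P → Option R, (∀ n ∉ S, η (δ n) = some n) ∧ ∀ n ∈ S, η (δ n) = none := by
  set δ' : R → Option R := fun n => if n ∈ S then none else some n
  have hfac : (δ' ∘ τ).FactorsThrough m := by
    intro p p' he
    by_cases hp : τ p ∈ S
    · by_cases hp' : τ p' ∈ S
      · simp [δ', hp, hp']
      · simp [hS p' p he.symm hp']
    · simp [hS p p' he hp]
  obtain ⟨η, -, hη⟩ := h.exists_desc (hfac.extend_comp fun _ => none)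
  exact ⟨η, fun n hn => (congrFun hη n).trans (if_neg hn),
    fun n hn => (congrFun hη n).trans (if_pos hn)⟩

theorem injOn_compl (h : IsSetPushout τ m τ₁ δ) {S : Set R}
    (hS : ∀ p p', m p = m p' → τ p ∉ S → τ p' = τ p) :
    Set.InjOn δ Sᶜ := by
  obtain ⟨η, hη, -⟩ := h.exists_option_right hS
  intro n hn n' hn' he
  simpa [hη n hn, hη n' hn'] using congrArg η he

theorem disjoint_image_compl_image (h : IsSetPushout τ m τ₁ δ) {S : Set R}
    (hS : ∀ p p', m p = m p' → τ p ∉ S → τ p' = τ p) :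
    Disjoint (δ '' Sᶜ) (δ '' S) := by
  obtain ⟨η, hη₁, hη₂⟩ := h.exists_option_right hS
  refine Set.disjoint_left.2 ?_
  rintro _ ⟨n, hn, rfl⟩ ⟨n', hn', he⟩
  simpa [hη₁ n hn, hη₂ n' hn'] using congrArg η he

end IsSetPushout

theorem IsMatching.eq_of_apply_eq {Ω : Type u} {ar : Ω → ℕ} {T : Rule Ω ar}
    {G : TermGraph Ω ar} {m : TermGraph.Hom T.L G} (hm : IsMatching T G m) {p p' : T.L.N}
    (he : m.toFun p = m.toFun p') (hp : ¬ (T.σ (T.τ p)).isSome) : p = p' :=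
  by_contra fun hne => hp (hm p p' hne he).1

/-- Decomposition of the pushout of `τ` and `|m|` in the category of sets, for a
matching `m` with respect to the rewrite rule `T`.  With `Γ = |G| − |m(L)|`,
`Σ = dom σ` and `Δ = |R| − Σ`: the pushout object is the disjoint union of
`τ₁(Γ)`, `δ(Δ)` and `δ(Σ)`, the restriction of `τ₁` to `Γ` is injective (hence
bijective onto its image) and the restriction of `δ` to `Δ` is injective (hence
bijective onto its image). -/
theorem set_pushout_decomposition {Ω : Type u} {ar : Ω → ℕ} (T : Rule Ω ar)
    (G : TermGraph Ω ar) (m : TermGraph.Hom T.L G) (hm : IsMatching T G m)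
    {ℋ : Type u} (τ₁ : G.N → ℋ) (δ : T.R.N → ℋ)
    (hpo : IsSetPushout T.τ m.toFun τ₁ δ) :
    (τ₁ '' (Set.range m.toFun)ᶜ ∪ δ '' {n | ¬ (T.σ n).isSome} ∪
        δ '' {n | (T.σ n).isSome} = Set.univ) ∧
    (τ₁ '' (Set.range m.toFun)ᶜ ∩ δ '' {n | ¬ (T.σ n).isSome} = ∅) ∧
    (τ₁ '' (Set.range m.toFun)ᶜ ∩ δ '' {n | (T.σ n).isSome} = ∅) ∧
    (δ '' {n | ¬ (T.σ n).isSome} ∩ δ '' {n | (T.σ n).isSome} = ∅) ∧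
    Set.InjOn τ₁ ((Set.range m.toFun)ᶜ) ∧
    Set.InjOn δ {n | ¬ (T.σ n).isSome} := by
  set S : Set T.R.N := {n | (T.σ n).isSome}
  have hS : ∀ p p', m.toFun p = m.toFun p' → T.τ p ∉ S → T.τ p' = T.τ p :=
    fun p p' he hp => congrArg T.τ (hm.eq_of_apply_eq he hp).symm
  have hSc : {n | ¬ (T.σ n).isSome} = Sᶜ := rfl
  rw [hSc, ← Set.disjoint_iff_inter_eq_empty, ← Set.disjoint_iff_inter_eq_empty,
    ← Set.disjoint_iff_inter_eq_empty]
  have hΓ := hpo.disjoint_image_compl_range_range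
  refine ⟨?_, hΓ.mono_right (Set.image_subset_range _ _),
    hΓ.mono_right (Set.image_subset_range _ _), hpo.disjoint_image_compl_image hS,
    hpo.injOn_compl_range, hpo.injOn_compl hS⟩
  rw [Set.union_assoc, Set.union_comm (δ '' Sᶜ), Set.image_union_image_compl_eq_range]
  exact hpo.image_compl_range_union_range
end

section
/- Let T = (L, R, τ, σ) be a rewrite rule and m : L → G a matching with respect to T. Let (ℋ, τ₁ : |G| → ℋ, δ : |R| → ℋ) be the pushout of τ : |L| → |R| and |m| : |L| → |G| in the category of sets, and let Σ = dom(σ). Then there is a unique partial function σ₁ : ℋ ⇀ |G| with domain δ(Σ) such that |m| ∘ σ = σ₁ ∘ δ on Σ; explicitly, σ₁(n₁) = m(σ(n)) for any n ∈ Σ with δ(n) = n₁, and this value is independent of the choice of n. -/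
/-!
Termgraphs over a signature `Ω` with arity function `ar`.
A termgraph has a type of nodes `N`; a node `n` is *labeled* when `label n = some ω`,
and then its successor string `succ n` has length `ar ω`; unlabeled nodes have an
empty successor string (the successor function is only meaningful on labeled nodes).
-/

universe u

open TermGraph

/-- There is a unique partial function `σ₁ : ℋ ⇀ |G|` with domain `δ(dom σ)` such
that `|m| ∘ σ = σ₁ ∘ δ` on `dom σ`; explicitly `σ₁ n₁ = m (σ n)` for any
`n ∈ dom σ` with `δ n = n₁`. -/
theorem sigma1_exists_unique {Ω : Type u} {ar : Ω → ℕ} (T : Rule Ω ar)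
    (G : TermGraph Ω ar) (m : TermGraph.Hom T.L G) (hm : IsMatching T G m)
    {ℋ : Type u} (τ₁ : G.N → ℋ) (δ : T.R.N → ℋ)
    (hpo : IsSetPushout T.τ m.toFun τ₁ δ) :
    ∃! σ₁ : ℋ → Option G.N,
      {x : ℋ | (σ₁ x).isSome} = δ '' {n | (T.σ n).isSome} ∧
      ∀ n : T.R.N, (T.σ n).isSome → σ₁ (δ n) = (T.σ n).map m.toFun := by

  classical
  obtain ⟨hcomm, huniv⟩ := hpo
  -- Key well-definedness: δ n = δ n' → images under m of σ agree
  have key : ∀ n n' : T.R.N, δ n = δ n' →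
      (T.σ n).map m.toFun = (T.σ n').map m.toFun := by
    set δ' : T.R.N → Option G.N := fun n => (T.σ n).map m.toFun with hδ'
    set τ₁' : G.N → Option G.N := fun g =>
      if h : ∃ p, m.toFun p = g then (T.σ (T.τ h.choose)).map m.toFun else none with hτ₁'
    have hc : τ₁' ∘ m.toFun = δ' ∘ T.τ := by
      funext p
      simp only [Function.comp, hτ₁', hδ']
      have h : ∃ q, m.toFun q = m.toFun p := ⟨p, rfl⟩
      rw [dif_pos h]
      by_cases hpq : h.choose = p
      · rw [hpq]
      · obtain ⟨_, _, heq⟩ := hm h.choose p hpq h.choose_spec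
        rw [heq]
    obtain ⟨η, ⟨_, hηδ⟩, _⟩ := huniv (Option G.N) τ₁' δ' hc
    intro n n' h
    have h1 := congrFun hηδ n
    have h2 := congrFun hηδ n'
    simp only [Function.comp, hδ'] at h1 h2
    rw [← h1, ← h2, h]
  -- define σ₁
  set σ₁ : ℋ → Option G.N := fun x =>
    if h : ∃ n, δ n = x ∧ (T.σ n).isSome then (T.σ h.choose).map m.toFun else none with hσ₁
  have hspec : ∀ n : T.R.N, (T.σ n).isSome → σ₁ (δ n) = (T.σ n).map m.toFun := by
    intro n hn
    have h : ∃ n', δ n' = δ n ∧ (T.σ n').isSome := ⟨n, rfl, hn⟩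
    simp only [hσ₁]
    rw [dif_pos h]
    exact key h.choose n h.choose_spec.1
  have hdom : {x : ℋ | (σ₁ x).isSome} = δ '' {n | (T.σ n).isSome} := by
    ext x
    constructor
    · intro hx
      simp only [Set.mem_setOf_eq, hσ₁] at hx
      by_cases h : ∃ n, δ n = x ∧ (T.σ n).isSome
      · exact ⟨h.choose, h.choose_spec.2, h.choose_spec.1⟩
      · rw [dif_neg h] at hx; simp at hx
    · rintro ⟨n, hn, rfl⟩
      simp only [Set.mem_setOf_eq]
      rw [hspec n hn]
      simpa using hn
  refine ⟨σ₁, ⟨hdom, hspec⟩, ?_⟩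
  rintro σ₁' ⟨hdom', hspec'⟩
  funext x
  by_cases hx : x ∈ δ '' {n | (T.σ n).isSome}
  · obtain ⟨n, hn, rfl⟩ := hx
    rw [hspec' n hn, hspec n hn]
  · have h1 : ¬ (σ₁' x).isSome := fun h => hx (hdom' ▸ h)
    have h2 : ¬ (σ₁ x).isSome := fun h => hx (hdom ▸ h)
    rw [Option.not_isSome_iff_eq_none] at h1 h2
    rw [h1, h2]
end

section
/- Let T = (L, R, τ, σ) be a rewrite rule, m : L → G a matching with respect to T, (ℋ, τ₁, δ) the pushout of τ and |m| in the category of sets, Γ = |G| − |m(L)|, Σ = dom(σ), Δ = |R| − Σ, and σ₁ : ℋ ⇀ |G| the unique partial function with domain δ(Σ) satisfying |m| ∘ σ = σ₁ ∘ δ. Then there exists a graph H with node set ℋ such that: τ₁ is strictly graphic on Γ, δ is strictly graphic on Δ, and every node n₁ ∈ δ(Σ) is a τ₁-clone of σ₁(n₁). -/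
/-!
Termgraphs over a signature `Ω` with arity function `ar`.
A termgraph has a type of nodes `N`; a node `n` is *labeled* when `label n = some ω`,
and then its successor string `succ n` has length `ar ω`; unlabeled nodes have an
empty successor string (the successor function is only meaningful on labeled nodes).
-/

universe u

open TermGraph

/-- There exists a graph `H` with node set `ℋ` (the pushout of `τ` and `|m|` in the
category of sets) such that `τ₁` is strictly graphic on `Γ = |G| − |m(L)|`, `δ` is
strictly graphic on `Δ = |R| − dom σ`, and every node `n₁ ∈ δ(dom σ)` is a
`τ₁`-clone of `σ₁ n₁`. -/
theorem graph_structure_exists {Ω : Type u} {ar : Ω → ℕ} (T : Rule Ω ar)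
    (G : TermGraph Ω ar) (m : TermGraph.Hom T.L G) (hm : IsMatching T G m)
    {ℋ : Type u} (τ₁ : G.N → ℋ) (δ : T.R.N → ℋ)
    (hpo : IsSetPushout T.τ m.toFun τ₁ δ)
    (σ₁ : ℋ → Option G.N)
    (hdom : {x : ℋ | (σ₁ x).isSome} = δ '' {n | (T.σ n).isSome})
    (hσ₁ : ∀ n : T.R.N, (T.σ n).isSome → σ₁ (δ n) = (T.σ n).map m.toFun) :
    ∃ (lab : ℋ → Option Ω) (suc : ℋ → List ℋ)
      (harr : ∀ x : ℋ, (suc x).length = ((lab x).map ar).getD 0),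
      StrictGraphicOn G ⟨ℋ, lab, suc, harr⟩ τ₁ ((Set.range m.toFun)ᶜ) ∧
      StrictGraphicOn T.R ⟨ℋ, lab, suc, harr⟩ δ {n | ¬ (T.σ n).isSome} ∧
      (∀ (x : ℋ) (q : G.N), σ₁ x = some q →
        IsClone G ⟨ℋ, lab, suc, harr⟩ τ₁ x q) := by
  classical
  obtain ⟨hcomm, huniv⟩ := hpo
  -- joint surjectivity of τ₁ and δ
  have hsurj : ∀ x : ℋ, x ∈ Set.range τ₁ ∪ Set.range δ := by
    intro x
    obtain ⟨η, -, huniq⟩ :=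
      huniv (ULift Bool) (fun _ => ⟨true⟩) (fun _ => ⟨true⟩) rfl
    have h2 : (fun y : ℋ =>
        (⟨decide (y ∈ Set.range τ₁ ∪ Set.range δ)⟩ : ULift Bool)) = η := by
      apply huniq
      constructor
      · funext g
        simp [Set.mem_union, Set.mem_range]
      · funext n
        simp [Set.mem_union, Set.mem_range]
    have h1 : (fun _ : ℋ => (⟨true⟩ : ULift Bool)) = η := huniq _ ⟨rfl, rfl⟩
    have hx := congrFun (h2.trans h1.symm) x
    have : decide (x ∈ Set.range τ₁ ∪ Set.range δ) = true := congrArg ULift.down hx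
    exact of_decide_eq_true this
  -- candidate data on R and G
  set δ' : T.R.N → Option Ω × List ℋ := fun n =>
    match T.σ n with
    | some q => (G.label (m.toFun q), (G.succ (m.toFun q)).map τ₁)
    | none => (T.R.label n, (T.R.succ n).map δ) with hδ'def
  have hδ'some : ∀ (n : T.R.N) (q : T.L.N), T.σ n = some q →
      δ' n = (G.label (m.toFun q), (G.succ (m.toFun q)).map τ₁) := by
    intro n q hq
    simp only [hδ'def, hq]
  have hδ'none : ∀ (n : T.R.N), T.σ n = none →
      δ' n = (T.R.label n, (T.R.succ n).map δ) := by
    intro n hq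
    simp only [hδ'def, hq]
  have hδ'const : ∀ p p' : T.L.N, m.toFun p = m.toFun p' →
      δ' (T.τ p) = δ' (T.τ p') := by
    intro p p' hpp'
    by_cases hpe : p = p'
    · rw [hpe]
    · obtain ⟨hs1, hs2, hs3⟩ := hm p p' hpe hpp'
      obtain ⟨q, hq⟩ := Option.isSome_iff_exists.mp hs1
      rw [hδ'some _ q hq, hδ'some _ q (hs3 ▸ hq)]
  set τ₁' : G.N → Option Ω × List ℋ := fun g =>
    if h : ∃ p, m.toFun p = g then δ' (T.τ h.choose)
    else (G.label g, (G.succ g).map τ₁) with hτ₁'def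
  have hτ₁'mem : ∀ p : T.L.N, τ₁' (m.toFun p) = δ' (T.τ p) := by
    intro p
    have hex : ∃ p', m.toFun p' = m.toFun p := ⟨p, rfl⟩
    have : τ₁' (m.toFun p) = δ' (T.τ hex.choose) := by
      simp only [hτ₁'def, dif_pos hex]
    rw [this]
    exact hδ'const _ _ hex.choose_spec
  have hτ₁'not : ∀ g : G.N, ¬(∃ p, m.toFun p = g) →
      τ₁' g = (G.label g, (G.succ g).map τ₁) := by
    intro g hg
    simp only [hτ₁'def, dif_neg hg]
  have hcomm' : τ₁' ∘ m.toFun = δ' ∘ T.τ := by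
    funext p
    exact hτ₁'mem p
  obtain ⟨η, ⟨hη1, hη2⟩, -⟩ := huniv (Option Ω × List ℋ) τ₁' δ' hcomm'
  have hη1' : ∀ g, η (τ₁ g) = τ₁' g := fun g => congrFun hη1 g
  have hη2' : ∀ n, η (δ n) = δ' n := fun n => congrFun hη2 n
  -- arity condition
  have harOkδ' : ∀ n : T.R.N, (δ' n).2.length = (((δ' n).1).map ar).getD 0 := by
    intro n
    cases hq : T.σ n with
    | some q =>
      rw [hδ'some n q hq]
      simp [G.arity_eq (m.toFun q)]
    | none =>
      rw [hδ'none n hq]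
      simp [T.R.arity_eq n]
  have harOkτ₁' : ∀ g : G.N, (τ₁' g).2.length = (((τ₁' g).1).map ar).getD 0 := by
    intro g
    by_cases hg : ∃ p, m.toFun p = g
    · obtain ⟨p, rfl⟩ := hg
      rw [hτ₁'mem p]
      exact harOkδ' (T.τ p)
    · rw [hτ₁'not g hg]
      simp [G.arity_eq g]
  have harr : ∀ x : ℋ, (η x).2.length = (((η x).1).map ar).getD 0 := by
    intro x
    rcases hsurj x with ⟨g, rfl⟩ | ⟨n, rfl⟩
    · rw [hη1']; exact harOkτ₁' g
    · rw [hη2']; exact harOkδ' n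
  refine ⟨fun x => (η x).1, fun x => (η x).2, harr, ?_, ?_, ?_⟩
  · -- τ₁ strictly graphic on complement of range m
    intro g hg
    have hg' : ¬(∃ p, m.toFun p = g) := hg
    have := hη1' g
    rw [hτ₁'not g hg'] at this
    constructor
    · exact congrArg Prod.fst this
    · exact congrArg Prod.snd this
  · -- δ strictly graphic on nodes outside dom σ
    intro n hn
    have hq : T.σ n = none := Option.not_isSome_iff_eq_none.mp hn
    have := hη2' n
    rw [hδ'none n hq] at this
    constructor
    · exact congrArg Prod.fst this
    · exact congrArg Prod.snd this
  · -- clone condition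
    intro x q hx
    have hxs : x ∈ {x : ℋ | (σ₁ x).isSome} := by
      simp [Set.mem_setOf_eq, hx]
    rw [hdom] at hxs
    obtain ⟨n, hn, rfl⟩ := hxs
    obtain ⟨q', hq'⟩ := Option.isSome_iff_exists.mp hn
    have hσ := hσ₁ n hn
    rw [hq'] at hσ
    simp only [Option.map_some] at hσ
    rw [hx] at hσ
    have hqq : q = m.toFun q' := Option.some_injective _ hσ
    have := hη2' n
    rw [hδ'some n q' hq'] at this
    subst hqq
    constructor
    · exact congrArg Prod.fst this
    · exact congrArg Prod.snd this
end

section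
/- Let T = (L, R, τ, σ) be a rewrite rule, m : L → G a matching with respect to T, (ℋ, τ₁, δ) the pushout of τ and |m| in the category of sets, Γ = |G| − |m(L)|, Σ = dom(σ), Δ = |R| − Σ, σ₁ : ℋ ⇀ |G| the unique partial function with domain δ(Σ) satisfying |m| ∘ σ = σ₁ ∘ δ, and H the graph with node set ℋ determined by: τ₁ strictly graphic on Γ, δ strictly graphic on Δ, and every n₁ ∈ δ(Σ) a τ₁-clone of σ₁(n₁). Then δ is graphic on all of |R|, hence δ underlies a graph morphism d : R → H. -/
/-!
Termgraphs over a signature `Ω` with arity function `ar`.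
A termgraph has a type of nodes `N`; a node `n` is *labeled* when `label n = some ω`,
and then its successor string `succ n` has length `ar ω`; unlabeled nodes have an
empty successor string (the successor function is only meaningful on labeled nodes).
-/

universe u

open TermGraph

/-- In the graph `H` built on the pushout `(H.N, τ₁, δ)` of `τ` and `|m|` in the
category of sets (with `τ₁` strictly graphic on `|G| − |m(L)|`, `δ` strictly graphic
on `|R| − dom σ`, and every node of `δ(dom σ)` a `τ₁`-clone of its `σ₁`-image), the
function `δ` is graphic on all of `|R|`, hence underlies a graph morphism
`d : R → H`. -/
theorem delta_underlies_hom {Ω : Type u} {ar : Ω → ℕ} (T : Rule Ω ar)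
    (G H : TermGraph Ω ar) (m : TermGraph.Hom T.L G) (hm : IsMatching T G m)
    (τ₁ : G.N → H.N) (δ : T.R.N → H.N)
    (hpo : IsSetPushout T.τ m.toFun τ₁ δ)
    (σ₁ : H.N → Option G.N)
    (hdom : {x : H.N | (σ₁ x).isSome} = δ '' {n | (T.σ n).isSome})
    (hσ₁ : ∀ n : T.R.N, (T.σ n).isSome → σ₁ (δ n) = (T.σ n).map m.toFun)
    (hΓ : StrictGraphicOn G H τ₁ ((Set.range m.toFun)ᶜ))
    (hΔ : StrictGraphicOn T.R H δ {n | ¬ (T.σ n).isSome})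
    (hclone : ∀ (x : H.N) (q : G.N), σ₁ x = some q → IsClone G H τ₁ x q)
 :
    GraphicOn T.R H δ Set.univ ∧ ∃ d : TermGraph.Hom T.R H, d.toFun = δ := by

  have key : GraphicOn T.R H δ Set.univ := by
    intro n _ ω hω
    by_cases hs : (T.σ n).isSome
    · obtain ⟨q, hq⟩ := Option.isSome_iff_exists.mp hs
      rcases T.σ_cond n q hq with hnone | ⟨hlab, hsucc⟩
      · rw [hω] at hnone; exact absurd hnone (by simp)
      have hLlab : T.L.label q = some ω := by rw [← hlab, hω]
      have hσ₁' : σ₁ (δ n) = some (m.toFun q) := by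
        rw [hσ₁ n hs, hq]; rfl
      obtain ⟨hc1, hc2⟩ := hclone (δ n) (m.toFun q) hσ₁'
      have hGlab : G.label (m.toFun q) = some ω := m.label_eq q ω hLlab
      have hGsucc : G.succ (m.toFun q) = (T.L.succ q).map m.toFun :=
        m.succ_eq q ω hLlab
      constructor
      · rw [hc1, hGlab]
      · rw [hc2, hGsucc, hsucc, List.map_map, List.map_map]
        rw [hpo.1]
    · obtain ⟨h1, h2⟩ := hΔ n hs
      exact ⟨by rw [h1, hω], h2⟩
  refine ⟨key, ⟨⟨δ, ?_, ?_⟩, rfl⟩⟩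
  · intro n ω hω; exact (key n trivial ω hω).1
  · intro n ω hω; exact (key n trivial ω hω).2
end

section
/- Let T = (L, R, τ, σ) be a rewrite rule and m : L → G a matching with respect to T. The cloning cone (H, τ₁, d, σ₁) over T and m constructed from the pushout of τ and |m| in the category of sets (with τ₁ strictly graphic on |G| − |m(L)|, |d| strictly graphic on |R| − dom(σ), every node in |d|(dom σ) a τ₁-clone of its σ₁-image, and σ₁ the unique partial function with domain |d|(dom σ) satisfying |m| ∘ σ = σ₁ ∘ |d|) is a cloning pushout of T and m, i.e. an initial object in the category of cloning cones over T and m. -/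
/-!
Termgraphs over a signature `Ω` with arity function `ar`.
A termgraph has a type of nodes `N`; a node `n` is *labeled* when `label n = some ω`,
and then its successor string `succ n` has length `ar ω`; unlabeled nodes have an
empty successor string (the successor function is only meaningful on labeled nodes).
-/

universe u

open TermGraph

/-- `(H, τ₁, d, σ₁)` is a cloning cone over the rewrite rule `T` and `m : L → G`:
`(G, H, τ₁, σ₁)` is a rewrite rule, `(m, d)` is a morphism of rewrite rules from `T`
to it, `τ₁` is graphic on `|G| − |m(L)|`, and every node in the domain of `σ₁` is a
`τ₁`-clone of its `σ₁`-image. -/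
def IsCloningCone {Ω : Type u} {ar : Ω → ℕ} (T : Rule Ω ar) (G : TermGraph Ω ar)
    (m : TermGraph.Hom T.L G) (H : TermGraph Ω ar) (τ₁ : G.N → H.N)
    (d : TermGraph.Hom T.R H) (σ₁ : H.N → Option G.N) : Prop :=
  d.toFun ∘ T.τ = τ₁ ∘ m.toFun ∧
  (∀ n : T.R.N, (T.σ n).isSome → (σ₁ (d.toFun n)).isSome) ∧
  (∀ (n : T.R.N) (q : T.L.N), T.σ n = some q → σ₁ (d.toFun n) = some (m.toFun q)) ∧
  GraphicOn G H τ₁ ((Set.range m.toFun)ᶜ) ∧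
  (∀ (x : H.N) (q : G.N), σ₁ x = some q → IsClone G H τ₁ x q)

/-- `h` is a morphism of cloning cones from `(H, τ₁, d, σ₁)` to `(H', τ₁', d', σ₁')`:
`|h| ∘ τ₁ = τ₁'`, `h ∘ d = d'`, `h(dom σ₁) ⊆ dom σ₁'` and `σ₁' ∘ |h| = σ₁` on `dom σ₁`. -/
def IsCloningConeMorphism {Ω : Type u} {ar : Ω → ℕ} {G H H' : TermGraph Ω ar}
    {R : TermGraph Ω ar}
    (τ₁ : G.N → H.N) (d : TermGraph.Hom R H) (σ₁ : H.N → Option G.N)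
    (τ₁' : G.N → H'.N) (d' : TermGraph.Hom R H') (σ₁' : H'.N → Option G.N)
    (h : TermGraph.Hom H H') : Prop :=
  h.toFun ∘ τ₁ = τ₁' ∧ h.toFun ∘ d.toFun = d'.toFun ∧
  (∀ x : H.N, (σ₁ x).isSome → (σ₁' (h.toFun x)).isSome) ∧
  (∀ x : H.N, (σ₁ x).isSome → σ₁' (h.toFun x) = σ₁ x)

theorem TermGraph.Hom.ext' {Ω : Type u} {ar : Ω → ℕ} {G H : TermGraph Ω ar}
    {f g : TermGraph.Hom G H} (h : f.toFun = g.toFun) : f = g := by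
  cases f; cases g; cases h; rfl

/-- Theorem 4.9: the cloning cone `(H, τ₁, d, σ₁)` built from the pushout of `τ`
and `|m|` in the category of sets is a cloning pushout of `T` and `m`, i.e. an
initial object in the category of cloning cones over `T` and `m`. -/
theorem constructed_is_cloning_pushout {Ω : Type u} {ar : Ω → ℕ} (T : Rule Ω ar)
    (G H : TermGraph Ω ar) (m : TermGraph.Hom T.L G) (hm : IsMatching T G m)
    (τ₁ : G.N → H.N) (δ : T.R.N → H.N)
    (hpo : IsSetPushout T.τ m.toFun τ₁ δ)
    (σ₁ : H.N → Option G.N)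
    (hdom : {x : H.N | (σ₁ x).isSome} = δ '' {n | (T.σ n).isSome})
    (hσ₁ : ∀ n : T.R.N, (T.σ n).isSome → σ₁ (δ n) = (T.σ n).map m.toFun)
    (hΓ : StrictGraphicOn G H τ₁ ((Set.range m.toFun)ᶜ))
    (hΔ : StrictGraphicOn T.R H δ {n | ¬ (T.σ n).isSome})
    (hclone : ∀ (x : H.N) (q : G.N), σ₁ x = some q → IsClone G H τ₁ x q)
    (d : TermGraph.Hom T.R H) (hd : d.toFun = δ) :
    IsCloningCone T G m H τ₁ d σ₁ ∧
    ∀ (H' : TermGraph Ω ar) (τ₁' : G.N → H'.N) (d' : TermGraph.Hom T.R H')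
      (σ₁' : H'.N → Option G.N), IsCloningCone T G m H' τ₁' d' σ₁' →
      ∃! h : TermGraph.Hom H H',
        IsCloningConeMorphism τ₁ d σ₁ τ₁' d' σ₁' h := by

  obtain ⟨hcomm, huniv⟩ := hpo
  -- joint surjectivity of τ₁ (off the image of m) and δ
  have hsurj : ∀ x : H.N, (∃ n, δ n = x) ∨
      (∃ g, g ∉ Set.range m.toFun ∧ τ₁ g = x) := by
    intro x
    obtain ⟨η, -, hu⟩ := huniv (ULift.{u} Prop) (fun _ => ⟨True⟩) (fun _ => ⟨True⟩) rfl
    have e1 : (fun _ : H.N => (⟨True⟩ : ULift.{u} Prop)) =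
        fun x => ⟨x ∈ Set.range τ₁ ∪ Set.range δ⟩ := by
      rw [hu (fun _ => ⟨True⟩) ⟨rfl, rfl⟩,
          hu (fun x => ⟨x ∈ Set.range τ₁ ∪ Set.range δ⟩)
            ⟨funext fun g => congrArg ULift.up (eq_true (Or.inl ⟨g, rfl⟩)),
             funext fun n => congrArg ULift.up (eq_true (Or.inr ⟨n, rfl⟩))⟩]
    have hx : x ∈ Set.range τ₁ ∪ Set.range δ :=
      of_eq_true (congrArg ULift.down (congrFun e1 x)).symm
    rcases hx with ⟨g, rfl⟩ | ⟨n, rfl⟩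
    · by_cases hg : g ∈ Set.range m.toFun
      · obtain ⟨p, rfl⟩ := hg
        exact Or.inl ⟨T.τ p, (congrFun hcomm p).symm⟩
      · exact Or.inr ⟨g, hg, rfl⟩
    · exact Or.inl ⟨n, rfl⟩
  constructor
  · refine ⟨?_, ?_, ?_, ?_, hclone⟩
    · rw [hd]; exact hcomm.symm
    · intro n hn
      rw [hd, hσ₁ n hn]
      obtain ⟨q, hq⟩ := Option.isSome_iff_exists.mp hn
      simp [hq]
    · intro n q hq
      rw [hd, hσ₁ n (by simp [hq]), hq]; rfl
    · intro g hg ω hω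
      obtain ⟨h1, h2⟩ := hΓ g hg
      exact ⟨by rw [h1, hω], h2⟩
  · intro H' τ₁' d' σ₁' hcone
    obtain ⟨hc1, hc2, hc3, hc4, hc5⟩ := hcone
    obtain ⟨η, ⟨hη1, hη2⟩, hηu⟩ := huniv H'.N τ₁' d'.toFun hc1.symm
    have hηhom : ∀ (x : H.N) (ω : Ω), H.label x = some ω →
        H'.label (η x) = some ω ∧ H'.succ (η x) = (H.succ x).map η := by
      intro x ω hω
      rcases hsurj x with ⟨n, rfl⟩ | ⟨g, hg, rfl⟩
      · have hηδ : η (δ n) = d'.toFun n := congrFun hη2 n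
        by_cases hn : (T.σ n).isSome
        · obtain ⟨q, hq⟩ := Option.isSome_iff_exists.mp hn
          have hσx : σ₁ (δ n) = some (m.toFun q) := by rw [hσ₁ n hn, hq]; rfl
          obtain ⟨hl, hs⟩ := hclone _ _ hσx
          obtain ⟨hl', hs'⟩ := hc5 _ _ (hc3 n q hq)
          refine ⟨by rw [hηδ, hl', ← hl, hω], ?_⟩
          rw [hηδ, hs', hs, List.map_map, ← hη1]
        · obtain ⟨hl, hs⟩ := hΔ n hn
          have hln : T.R.label n = some ω := by rw [← hl, hω]
          refine ⟨by rw [hηδ]; exact d'.label_eq n ω hln, ?_⟩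
          rw [hηδ, d'.succ_eq n ω hln, hs, List.map_map, ← hη2]
      · have hητ : η (τ₁ g) = τ₁' g := congrFun hη1 g
        obtain ⟨hl, hs⟩ := hΓ g hg
        have hlg : G.label g = some ω := by rw [← hl, hω]
        obtain ⟨hl', hs'⟩ := hc4 g hg ω hlg
        refine ⟨by rw [hητ, hl'], ?_⟩
        rw [hητ, hs', hs, List.map_map, ← hη1]
    refine ⟨⟨η, fun n ω h => (hηhom n ω h).1, fun n ω h => (hηhom n ω h).2⟩,
      ⟨hη1, by rw [hd]; exact hη2, ?_, ?_⟩, ?_⟩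
    · intro x hx
      have hx' : x ∈ δ '' {n | (T.σ n).isSome} := hdom ▸ hx
      obtain ⟨n, hn, rfl⟩ := hx'
      have h2 : η (δ n) = d'.toFun n := congrFun hη2 n
      show (σ₁' (η (δ n))).isSome
      rw [h2]; exact hc2 n hn
    · intro x hx
      have hx' : x ∈ δ '' {n | (T.σ n).isSome} := hdom ▸ hx
      obtain ⟨n, hn, rfl⟩ := hx'
      obtain ⟨q, hq⟩ := Option.isSome_iff_exists.mp hn
      have h2 : η (δ n) = d'.toFun n := congrFun hη2 n
      show σ₁' (η (δ n)) = σ₁ (δ n)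
      rw [h2, hc3 n q hq, hσ₁ n hn, hq]; rfl
    · rintro h' ⟨hm1, hm2, -, -⟩
      exact TermGraph.Hom.ext' (hηu h'.toFun ⟨hm1, by rw [← hm2, hd]⟩)
end

section
/- Let T = (L, R, τ, σ) be a rewrite rule, m : L → G a matching with respect to T, and (H, τ₁, d, σ₁) the cloning cone over T and m constructed from the pushout of τ and |m| in the category of sets. Let (H', τ₁', d', σ₁') be any cloning cone over T and m, and let η : |H| → |H'| be the unique function with η ∘ τ₁ = τ₁' and η ∘ |d| = |d'| given by the universal property of the pushout of sets. Then η is graphic on all of |H| (so η underlies a graph morphism h : H → H'), η(dom σ₁) ⊆ dom σ₁', and σ₁' ∘ η = σ₁ on dom σ₁; thus h is a morphism of cloning cones. -/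
/-!
Termgraphs over a signature `Ω` with arity function `ar`.
A termgraph has a type of nodes `N`; a node `n` is *labeled* when `label n = some ω`,
and then its successor string `succ n` has length `ar ω`; unlabeled nodes have an
empty successor string (the successor function is only meaningful on labeled nodes).
-/

universe u

open TermGraph

/-- Let `(H, τ₁, d, σ₁)` be the cloning cone built from the pushout of `τ` and `|m|`
in the category of sets, let `(H', τ₁', d', σ₁')` be any cloning cone over `T` and
`m`, and let `η : |H| → |H'|` be the unique function with `η ∘ τ₁ = τ₁'` and
`η ∘ |d| = |d'|` given by the universal property of the pushout of sets.  Then `η`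
is graphic on all of `|H|` (so it underlies a graph morphism `h : H → H'`),
`η(dom σ₁) ⊆ dom σ₁'` and `σ₁' ∘ η = σ₁` on `dom σ₁`; thus `h` is a morphism of
cloning cones. -/
theorem mediating_is_cone_morphism {Ω : Type u} {ar : Ω → ℕ} (T : Rule Ω ar)
    (G H : TermGraph Ω ar) (m : TermGraph.Hom T.L G) (hm : IsMatching T G m)
    (τ₁ : G.N → H.N) (δ : T.R.N → H.N)
    (hpo : IsSetPushout T.τ m.toFun τ₁ δ)
    (σ₁ : H.N → Option G.N)
    (hdom : {x : H.N | (σ₁ x).isSome} = δ '' {n | (T.σ n).isSome})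
    (hσ₁ : ∀ n : T.R.N, (T.σ n).isSome → σ₁ (δ n) = (T.σ n).map m.toFun)
    (hΓ : StrictGraphicOn G H τ₁ ((Set.range m.toFun)ᶜ))
    (hΔ : StrictGraphicOn T.R H δ {n | ¬ (T.σ n).isSome})
    (hclone : ∀ (x : H.N) (q : G.N), σ₁ x = some q → IsClone G H τ₁ x q)
    (d : TermGraph.Hom T.R H) (hd : d.toFun = δ)
    (H' : TermGraph Ω ar) (τ₁' : G.N → H'.N) (d' : TermGraph.Hom T.R H')
    (σ₁' : H'.N → Option G.N)
    (hcone' : IsCloningCone T G m H' τ₁' d' σ₁')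
    (η : H.N → H'.N) (hη₁ : η ∘ τ₁ = τ₁') (hη₂ : η ∘ d.toFun = d'.toFun) :
    GraphicOn H H' η Set.univ ∧
    (∃ h : TermGraph.Hom H H', h.toFun = η) ∧
    (∀ x : H.N, (σ₁ x).isSome → (σ₁' (η x)).isSome) ∧
    (∀ x : H.N, (σ₁ x).isSome → σ₁' (η x) = σ₁ x) := by

  obtain ⟨hcomm, hup⟩ := hpo
  obtain ⟨hc1, hc2, hc3, hc4, hc5⟩ := hcone'
  rw [hd] at hη₂
  have hηδ : ∀ n, η (δ n) = d'.toFun n := fun n => congrFun hη₂ n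
  have hητ : ∀ q, η (τ₁ q) = τ₁' q := fun q => congrFun hη₁ q
  -- every node of H is in the image of τ₁ or δ
  have hsurj : ∀ x : H.N, (∃ q, τ₁ q = x ∧ q ∉ Set.range m.toFun) ∨ (∃ n, δ n = x) := by
    have key : ∀ x : H.N, x ∈ Set.range τ₁ ∪ Set.range δ := by
      intro x
      obtain ⟨f, _, huniq⟩ := hup (ULift.{u} Prop) (fun _ => ⟨True⟩) (fun _ => ⟨True⟩) rfl
      have h1 : (fun p : H.N => (⟨p ∈ Set.range τ₁ ∪ Set.range δ⟩ : ULift.{u} Prop)) = f :=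
        huniq _ ⟨funext fun q => congrArg ULift.up (eq_true (Or.inl ⟨q, rfl⟩)),
                 funext fun n => congrArg ULift.up (eq_true (Or.inr ⟨n, rfl⟩))⟩
      have h2 : (fun _ : H.N => (⟨True⟩ : ULift.{u} Prop)) = f :=
        huniq _ ⟨rfl, rfl⟩
      have := congrArg ULift.down (congrFun (h1.trans h2.symm) x)
      exact of_eq_true this
    intro x
    rcases key x with ⟨q, rfl⟩ | ⟨n, rfl⟩
    · by_cases hq : q ∈ Set.range m.toFun
      · obtain ⟨p, rfl⟩ := hq
        exact Or.inr ⟨T.τ p, (congrFun hcomm p).symm⟩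
      · exact Or.inl ⟨q, rfl, hq⟩
    · exact Or.inr ⟨n, rfl⟩
  have hgr : GraphicOn H H' η Set.univ := by
    intro x _
    rcases hsurj x with ⟨q, rfl, hq⟩ | ⟨n, rfl⟩
    · intro ω hω
      have hs := hΓ q hq
      have hGq : G.label q = some ω := hs.1.symm.trans hω
      have hg := hc4 q hq ω hGq
      refine ⟨by rw [hητ]; exact hg.1, ?_⟩
      rw [hητ, hg.2, hs.2, List.map_map, hη₁]
    · by_cases hn : (T.σ n).isSome
      · obtain ⟨q, hq⟩ := Option.isSome_iff_exists.mp hn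
        have hσx : σ₁ (δ n) = some (m.toFun q) := by
          rw [hσ₁ n hn, hq]; rfl
        have hcl := hclone _ _ hσx
        have hσ' : σ₁' (d'.toFun n) = some (m.toFun q) := hc3 n q hq
        have hcl' := hc5 _ _ hσ'
        intro ω hω
        have hGq : G.label (m.toFun q) = some ω := hcl.1.symm.trans hω
        refine ⟨by rw [hηδ, hcl'.1, hGq], ?_⟩
        rw [hηδ, hcl'.2, hcl.2, List.map_map, hη₁]
      · have hs := hΔ n hn
        intro ω hω
        have hRn : T.R.label n = some ω := hs.1.symm.trans hω
        refine ⟨by rw [hηδ]; exact d'.label_eq n ω hRn, ?_⟩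
        rw [hηδ, d'.succ_eq n ω hRn, hs.2, List.map_map, hη₂]
  have hσs : ∀ x, (σ₁ x).isSome → σ₁' (η x) = σ₁ x := by
    intro x hx
    have hmem : x ∈ δ '' {n | (T.σ n).isSome} := by rw [← hdom]; exact hx
    obtain ⟨n, hn, rfl⟩ := hmem
    obtain ⟨q, hq⟩ := Option.isSome_iff_exists.mp hn
    rw [hηδ, hc3 n q hq, hσ₁ n hn, hq]
    rfl
  refine ⟨hgr, ⟨⟨η, fun n ω h => (hgr n trivial ω h).1,
    fun n ω h => (hgr n trivial ω h).2⟩, rfl⟩, ?_, hσs⟩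
  intro x hx
  rw [hσs x hx]
  exact hx
end
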